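/- arXiv:2208.12594 — 4 statements merged into one kernel-verified Lean document; each statement's English description precedes it below -/
import Mathlib

section
/- Let Z be a metric measure space, V a Banach space, u : Z → V, g a Hajłasz upper gradient of u, and φ : Z → ℝ an L-Lipschitz bounded function. Set K = Z \ {φ = 0}. Then g̃ = (L·|u| + ‖φ‖_∞ · g)·χ_K is a Hajłasz upper gradient of the product φ·u. -/
open MeasureTheory Metric
open scoped ENNReal NNReal

/-- `g` is a Hajłasz upper gradient of `u : Z → V` with respect to the measure `μ`. -/
def IsHajlaszUpperGradient {Z V : Type*} [MetricSpace Z] [MeasurableSpace Z]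
    [NormedAddCommGroup V] (μ : Measure Z) (g : Z → ℝ) (u : Z → V) : Prop :=
  Measurable g ∧ ∃ N : Set Z, μ N = 0 ∧
    ∀ x ∉ N, ∀ y ∉ N, ‖u x - u y‖ ≤ dist x y * (g x + g y)

/-- **Lemma 3.2 (3).** If `g` is a Hajłasz upper gradient of `u` and `φ : Z → ℝ` is an
`L`-Lipschitz bounded function, then with `K = Z \ {φ = 0}` the function
`g̃ = (L‖u‖ + ‖φ‖_∞ g) χ_K` is a Hajłasz upper gradient of `φ · u`. -/
theorem stmt_2 {Z V : Type*} [MetricSpace Z] [MeasurableSpace Z] [OpensMeasurableSpace Z]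
    [NormedAddCommGroup V] [NormedSpace ℝ V]
    (μ : Measure Z) (u : Z → V) (hu : Measurable fun z => ‖u z‖)
    (g : Z → ℝ)
    (hg : IsHajlaszUpperGradient μ g u) (hg0 : ∀ z, 0 ≤ g z)
    (L : ℝ≥0) (φ : Z → ℝ) (hφ : LipschitzWith L φ)
    (hbd : BddAbove (Set.range fun z => |φ z|)) :
    IsHajlaszUpperGradient μ
      ({z : Z | φ z ≠ 0}.indicator
        (fun z => (L : ℝ) * ‖u z‖ + (⨆ w : Z, |φ w|) * g z))
      (fun z => φ z • u z) := by
  obtain ⟨hgm, N, hN, hNub⟩ := hg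
  set S := ⨆ w : Z, |φ w| with hSdef
  have habs : ∀ z, |φ z| ≤ S := fun z => le_ciSup hbd z
  have hKmeas : MeasurableSet {z : Z | φ z ≠ 0} := by
    have : {z : Z | φ z ≠ 0} = φ ⁻¹' ({0}ᶜ) := rfl
    rw [this]
    exact hφ.continuous.measurable (measurableSet_singleton (0:ℝ)).compl
  refine ⟨Measurable.indicator ((measurable_const.mul hu).add
      (measurable_const.mul hgm)) hKmeas, N, hN, ?_⟩
  intro x hx y hy
  have hd : 0 ≤ dist x y := dist_nonneg
  have hSnn : 0 ≤ S := le_trans (abs_nonneg (φ x)) (habs x)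
  have hGnn : ∀ z : Z, 0 ≤ (L : ℝ) * ‖u z‖ + S * g z := fun z =>
    add_nonneg (mul_nonneg L.coe_nonneg (norm_nonneg _)) (mul_nonneg hSnn (hg0 z))
  have hlip : |φ x - φ y| ≤ (L : ℝ) * dist x y := by
    have := hφ.dist_le_mul x y
    simpa [Real.dist_eq] using this
  by_cases hx0 : φ x = 0 <;> by_cases hy0 : φ y = 0
  · simp only [hx0, hy0, zero_smul, sub_zero, norm_zero]
    exact mul_nonneg hd (add_nonneg
      (Set.indicator_nonneg (fun z _ => hGnn z) x)
      (Set.indicator_nonneg (fun z _ => hGnn z) y))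
  · -- φ x = 0, φ y ≠ 0
    have hiy : Set.indicator {z : Z | φ z ≠ 0}
        (fun z => (L : ℝ) * ‖u z‖ + S * g z) y = (L : ℝ) * ‖u y‖ + S * g y :=
      Set.indicator_of_mem (show y ∈ {z : Z | φ z ≠ 0} from hy0) _
    have hix : Set.indicator {z : Z | φ z ≠ 0}
        (fun z => (L : ℝ) * ‖u z‖ + S * g z) x = 0 :=
      Set.indicator_of_notMem (by simpa using hx0) _
    rw [hix, hiy]
    have h1 : ‖φ x • u x - φ y • u y‖ = |φ y| * ‖u y‖ := by
      simp [hx0, norm_smul]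
    rw [h1]
    have h2 : |φ y| ≤ (L : ℝ) * dist x y := by
      have : |φ x - φ y| = |φ y| := by rw [hx0]; simp
      linarith [hlip, this.symm.le, this.le]
    nlinarith [norm_nonneg (u y), mul_nonneg hSnn (hg0 y), h2, hd]
  · -- φ x ≠ 0, φ y = 0
    have hix : Set.indicator {z : Z | φ z ≠ 0}
        (fun z => (L : ℝ) * ‖u z‖ + S * g z) x = (L : ℝ) * ‖u x‖ + S * g x :=
      Set.indicator_of_mem (show x ∈ {z : Z | φ z ≠ 0} from hx0) _
    have hiy : Set.indicator {z : Z | φ z ≠ 0}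
        (fun z => (L : ℝ) * ‖u z‖ + S * g z) y = 0 :=
      Set.indicator_of_notMem (by simpa using hy0) _
    rw [hix, hiy]
    have h1 : ‖φ x • u x - φ y • u y‖ = |φ x| * ‖u x‖ := by
      simp [hy0, norm_smul]
    rw [h1]
    have h2 : |φ x| ≤ (L : ℝ) * dist x y := by
      have : |φ x - φ y| = |φ x| := by rw [hy0]; simp
      linarith [hlip, this.le]
    nlinarith [norm_nonneg (u x), mul_nonneg hSnn (hg0 x), h2, hd]
  · -- both nonzero
    have hix : Set.indicator {z : Z | φ z ≠ 0}
        (fun z => (L : ℝ) * ‖u z‖ + S * g z) x = (L : ℝ) * ‖u x‖ + S * g x :=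
      Set.indicator_of_mem (show x ∈ {z : Z | φ z ≠ 0} from hx0) _
    have hiy : Set.indicator {z : Z | φ z ≠ 0}
        (fun z => (L : ℝ) * ‖u z‖ + S * g z) y = (L : ℝ) * ‖u y‖ + S * g y :=
      Set.indicator_of_mem (show y ∈ {z : Z | φ z ≠ 0} from hy0) _
    rw [hix, hiy]
    have hsplit : φ x • u x - φ y • u y = (φ x - φ y) • u x + φ y • (u x - u y) := by
      rw [sub_smul, smul_sub]; abel
    have key : ‖φ x • u x - φ y • u y‖ ≤ |φ x - φ y| * ‖u x‖ + |φ y| * ‖u x - u y‖ := by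
      rw [hsplit]
      calc ‖(φ x - φ y) • u x + φ y • (u x - u y)‖
          ≤ ‖(φ x - φ y) • u x‖ + ‖φ y • (u x - u y)‖ := norm_add_le _ _
        _ = |φ x - φ y| * ‖u x‖ + |φ y| * ‖u x - u y‖ := by
            rw [norm_smul, norm_smul, Real.norm_eq_abs, Real.norm_eq_abs]
    have hu' : ‖u x - u y‖ ≤ dist x y * (g x + g y) := hNub x hx y hy
    have hφy : |φ y| ≤ S := habs y
    nlinarith [norm_nonneg (u x), norm_nonneg (u x - u y), abs_nonneg (φ y),
      mul_nonneg hSnn (hg0 x), mul_nonneg hSnn (hg0 y), hd,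
      mul_nonneg L.coe_nonneg (norm_nonneg (u y)), hlip]
end

section
/- Let Z be a metric measure space, V a Banach space, u : Z → V measurable, and g : Z → [0,∞] measurable. Then g is a Hajłasz upper gradient of u if and only if g is a Hajłasz upper gradient of the real-valued function w(u) for every continuous linear functional w ∈ V* with ‖w‖ ≤ 1. -/
open MeasureTheory Metric
open scoped ENNReal NNReal Pointwise

/-- **Lemma 3.3 ((1) ⟺ (2)).** For a measurable `u : Z → V` (essentially separably
valued) and measurable `g : Z → [0,∞)`, the function `g` is a Hajłasz upper gradient
of `u` if and only if `g` is a Hajłasz upper gradient of `w ∘ u` for every continuous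
linear functional `w : V → ℝ` with `‖w‖ ≤ 1`. -/
theorem stmt_3 {Z V : Type*} [MetricSpace Z] [MeasurableSpace Z]
    [NormedAddCommGroup V] [NormedSpace ℝ V] [MeasurableSpace V] [BorelSpace V]
    (μ : Measure Z) (u : Z → V) (hu : Measurable u)
    (hsep : ∃ N : Set Z, μ N = 0 ∧ TopologicalSpace.IsSeparable (u '' Nᶜ))
    (g : Z → ℝ) (hgmeas : Measurable g) (hg0 : ∀ z, 0 ≤ g z) :
    IsHajlaszUpperGradient μ g u ↔
      ∀ w : V →L[ℝ] ℝ, ‖w‖ ≤ 1 →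
        IsHajlaszUpperGradient μ g (fun z => w (u z)) := by
  constructor
  · rintro ⟨hg, N, hN, hN'⟩ w hw
    refine ⟨hg, N, hN, fun x hx y hy => ?_⟩
    calc ‖w (u x) - w (u y)‖ = ‖w (u x - u y)‖ := by rw [map_sub]
      _ ≤ ‖w‖ * ‖u x - u y‖ := w.le_opNorm _
      _ ≤ 1 * ‖u x - u y‖ := by gcongr
      _ = ‖u x - u y‖ := one_mul _
      _ ≤ dist x y * (g x + g y) := hN' x hx y hy
  · intro h
    obtain ⟨N₀, hN₀, hsepS⟩ := hsep
    refine ⟨hgmeas, ?_⟩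
    have hsep2 : TopologicalSpace.IsSeparable ((u '' N₀ᶜ) - (u '' N₀ᶜ)) := by
      have himg := (hsepS.prod hsepS).image (f := fun p : V × V => p.1 - p.2)
        (continuous_fst.sub continuous_snd)
      rw [Set.image_prod] at himg
      rw [← Set.image2_sub]
      exact himg
    obtain ⟨c, hc_count, hc_sub⟩ := hsep2
    choose wfun hw1 hw2 using fun d : V => exists_dual_vector'' ℝ d
    choose Nf hNf hNf' using fun d : V => (h (wfun d) (hw1 d)).2
    refine ⟨N₀ ∪ ⋃ d ∈ c, Nf d, ?_, ?_⟩
    · refine measure_union_null hN₀ ((measure_biUnion_null_iff hc_count).2 fun d _ => hNf d)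
    · intro x hx y hy
      simp only [Set.mem_union, Set.mem_iUnion, not_or, not_exists] at hx hy
      have hv : u x - u y ∈ (u '' N₀ᶜ) - (u '' N₀ᶜ) :=
        Set.sub_mem_sub (Set.mem_image_of_mem u hx.1) (Set.mem_image_of_mem u hy.1)
      set v := u x - u y with hvdef
      refine le_of_forall_pos_le_add fun ε hε => ?_
      have hvc : v ∈ closure c := hc_sub hv
      obtain ⟨d, hdc, hdv⟩ := Metric.mem_closure_iff.1 hvc (ε / 2) (by linarith)
      have hxd : x ∉ Nf d := hx.2 d hdc
      have hyd : y ∉ Nf d := hy.2 d hdc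
      have hkey : ‖wfun d (u x) - wfun d (u y)‖ ≤ dist x y * (g x + g y) :=
        hNf' d x hxd y hyd
      have hdvnorm : ‖v - d‖ < ε / 2 := by
        rw [← dist_eq_norm]; exact hdv
      have h1 : ‖v‖ ≤ ‖d‖ + ε / 2 := by
        calc ‖v‖ ≤ ‖d‖ + ‖v - d‖ := norm_le_norm_add_norm_sub' v d
          _ ≤ ‖d‖ + ε / 2 := by linarith
      have h2 : ‖d‖ = wfun d d := (hw2 d).symm
      have h3 : wfun d d ≤ wfun d v + ε / 2 := by
        have hmap : wfun d (d - v) = wfun d d - wfun d v := map_sub (wfun d) d v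
        have h6 : ‖wfun d (d - v)‖ ≤ ε / 2 := by
          calc ‖wfun d (d - v)‖ ≤ ‖wfun d‖ * ‖d - v‖ := (wfun d).le_opNorm _
            _ ≤ 1 * ‖d - v‖ := by gcongr; exact hw1 d
            _ = ‖v - d‖ := by rw [one_mul, norm_sub_rev]
            _ ≤ ε / 2 := le_of_lt hdvnorm
        have h6' : |wfun d d - wfun d v| ≤ ε / 2 := by
          rw [← Real.norm_eq_abs, ← hmap]; exact h6
        linarith [le_abs_self (wfun d d - wfun d v), h6']
      have h7 : wfun d v ≤ dist x y * (g x + g y) := by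
        have : wfun d v = wfun d (u x) - wfun d (u y) := by rw [hvdef, map_sub]
        rw [this]
        exact (le_abs_self _).trans (by rw [← Real.norm_eq_abs]; exact hkey)
      linarith
end

section
/- Let Z be a metric measure space, 1 ≤ p < ∞, and let V_n denote ℝⁿ with the supremum norm with standard basis e₁,…,e_n. If u = Σ_{i=1}^n u_i e_i with u_i ∈ W^{1,p}(Z) for each i, then u ∈ W^{1,p}(Z; V_n) and its minimal p-weak upper gradient satisfies ρ_u = sup_{1 ≤ i ≤ n} ρ_{u_i} almost everywhere. -/
/-!
The sup norm of a difference is the largest componentwise difference, so off the finite (hence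
negligible) union of the exceptional path families of the `uᵢ`, `supᵢ ρᵢ` is an upper gradient
of `u`, and it lies in `L^p` since it is dominated by the sup norm of `(ρᵢ)ᵢ`. Conversely, every
upper gradient of `u` is one of each `uᵢ`, hence dominates each minimal `ρᵢ` almost everywhere.
-/

open MeasureTheory Metric
open scoped ENNReal NNReal

/-- A path of speed at most `1` (unit-speed parametrization) defined on `[a,b]`.
Every rectifiable path arises this way after arclength reparametrization, and path
integrals are computed along such parametrizations. -/
structure UnitSpeedPath (Z : Type*) [MetricSpace Z] where
  a : ℝ
  b : ℝ
  hab : a ≤ b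
  toFun : ℝ → Z
  lip : LipschitzOnWith 1 toFun (Set.Icc a b)

/-- The path integral `∫_γ ρ ds` of a nonnegative function along a unit-speed path. -/
noncomputable def UnitSpeedPath.integral {Z : Type*} [MetricSpace Z]
    (γ : UnitSpeedPath Z) (ρ : Z → ℝ) : ℝ≥0∞ :=
  ∫⁻ t in Set.Icc γ.a γ.b, ENNReal.ofReal (ρ (γ.toFun t))

/-- A family `Γ` of paths is `p`-negligible if some nonnegative Borel `ρ ∈ L^p(μ)`
has infinite path integral along every path of `Γ`. -/
def PNegligible {Z : Type*} [MetricSpace Z] [MeasurableSpace Z]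
    (μ : MeasureTheory.Measure Z) (p : ℝ≥0∞) (Γ : Set (UnitSpeedPath Z)) : Prop :=
  ∃ ρ : Z → ℝ, Measurable ρ ∧ (∀ z, 0 ≤ ρ z) ∧ MeasureTheory.MemLp ρ p μ ∧
    ∀ γ ∈ Γ, γ.integral ρ = ∞

/-- `ρ` is a `p`-weak upper gradient of `u : Z → V`: `ρ` is a nonnegative Borel
function and, for `p`-almost every path `γ : [a,b] → Z`,
`‖u (γ a) − u (γ b)‖ ≤ ∫_γ ρ ds`. -/
def IsWeakUpperGradient {Z V : Type*} [MetricSpace Z] [MeasurableSpace Z]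
    [NormedAddCommGroup V] (μ : MeasureTheory.Measure Z) (p : ℝ≥0∞)
    (u : Z → V) (ρ : Z → ℝ) : Prop :=
  Measurable ρ ∧ (∀ z, 0 ≤ ρ z) ∧
    PNegligible μ p {γ : UnitSpeedPath Z |
      ¬ ENNReal.ofReal ‖u (γ.toFun γ.a) - u (γ.toFun γ.b)‖ ≤ γ.integral ρ}

/-- `ρ` is a minimal `p`-weak upper gradient of `u`: an `L^p`-integrable `p`-weak
upper gradient which is `μ`-a.e. dominated by every other `L^p`-integrable `p`-weak
upper gradient of `u`. -/
def IsMinimalWeakUpperGradient {Z V : Type*} [MetricSpace Z] [MeasurableSpace Z]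
    [NormedAddCommGroup V] (μ : MeasureTheory.Measure Z) (p : ℝ≥0∞)
    (u : Z → V) (ρ : Z → ℝ) : Prop :=
  IsWeakUpperGradient μ p u ρ ∧ MeasureTheory.MemLp ρ p μ ∧
    ∀ σ : Z → ℝ, IsWeakUpperGradient μ p u σ → MeasureTheory.MemLp σ p μ →
      ∀ᵐ z ∂μ, ρ z ≤ σ z

section

variable {ι : Type*} [Fintype ι]

lemma pi_enorm_le_iff {E : ι → Type*} [∀ i, NormedAddCommGroup (E i)] (x : Π i, E i)
    (r : ℝ≥0∞) : ‖x‖ₑ ≤ r ↔ ∀ i, ‖x i‖ₑ ≤ r := by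
  simp only [enorm, Pi.nnnorm_def, ENNReal.coe_finset_sup, Finset.sup_le_iff, Finset.mem_univ,
    true_imp_iff]

lemma abs_iSup_le_pi_norm (f : ι → ℝ) : |⨆ i, f i| ≤ ‖f‖ := by
  refine abs_le.2 ⟨?_, Real.iSup_le (fun i => (le_abs_self _).trans (norm_le_pi_norm f i))
    (norm_nonneg _)⟩
  cases isEmpty_or_nonempty ι with
  | inl _ => simp
  | inr _ =>
    obtain ⟨i⟩ := ‹Nonempty ι›
    calc -‖f‖ ≤ -|f i| := neg_le_neg (norm_le_pi_norm f i)
      _ ≤ f i := neg_abs_le _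
      _ ≤ ⨆ j, f j := le_ciSup (Finite.bddAbove_range f) i

lemma MeasureTheory.MemLp.iSup {X : Type*} [MeasurableSpace X] {μ : Measure X} {p : ℝ≥0∞}
    {f : ι → X → ℝ} (hf : ∀ i, MemLp (f i) p μ) : MemLp (fun x => ⨆ i, f i x) p μ :=
  (MemLp.of_eval hf).of_le (AEMeasurable.iSup fun i => (hf i).1.aemeasurable).aestronglyMeasurable
    (.of_forall fun x => abs_iSup_le_pi_norm fun i => f i x)

end

namespace UnitSpeedPath

variable {Z : Type*} [MetricSpace Z]

lemma integral_mono (γ : UnitSpeedPath Z) {ρ σ : Z → ℝ} (h : ρ ≤ σ) :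
    γ.integral ρ ≤ γ.integral σ :=
  lintegral_mono fun _ => ENNReal.ofReal_le_ofReal (h _)

end UnitSpeedPath

section WeakUpperGradient

variable {Z : Type*} [MetricSpace Z] [MeasurableSpace Z] {μ : Measure Z} {p : ℝ≥0∞}

lemma PNegligible.mono {Γ Γ' : Set (UnitSpeedPath Z)} (h : PNegligible μ p Γ') (hΓ : Γ ⊆ Γ') :
    PNegligible μ p Γ :=
  let ⟨ρ, hmeas, hnonneg, hLp, hinf⟩ := h
  ⟨ρ, hmeas, hnonneg, hLp, fun γ hγ => hinf γ (hΓ hγ)⟩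

lemma PNegligible.iUnion {ι : Type*} [Fintype ι] {Γ : ι → Set (UnitSpeedPath Z)}
    (h : ∀ i, PNegligible μ p (Γ i)) : PNegligible μ p (⋃ i, Γ i) := by
  choose ρ hmeas hnonneg hLp hinf using h
  refine ⟨fun z => ∑ i, ρ i z, Finset.measurable_sum _ fun i _ => hmeas i,
    fun z => Finset.sum_nonneg fun i _ => hnonneg i z, memLp_finsetSum _ fun i _ => hLp i,
    fun γ hγ => ?_⟩
  obtain ⟨i, hi⟩ := Set.mem_iUnion.1 hγ
  refine top_le_iff.1 (hinf i γ hi ▸ γ.integral_mono fun z => ?_)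
  simpa using Finset.single_le_sum (fun j _ => hnonneg j z) (Finset.mem_univ i)

lemma IsWeakUpperGradient.of_norm_sub_le {V W : Type*} [NormedAddCommGroup V]
    [NormedAddCommGroup W] {u : Z → V} {w : Z → W} {ρ : Z → ℝ}
    (hu : IsWeakUpperGradient μ p u ρ) (h : ∀ x y, ‖w x - w y‖ ≤ ‖u x - u y‖) :
    IsWeakUpperGradient μ p w ρ :=
  ⟨hu.1, hu.2.1, hu.2.2.mono fun _ hγ hle => hγ ((ENNReal.ofReal_le_ofReal (h _ _)).trans hle)⟩

lemma IsWeakUpperGradient.mono {V : Type*} [NormedAddCommGroup V] {u : Z → V} {ρ σ : Z → ℝ}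
    (hu : IsWeakUpperGradient μ p u ρ) (hσ : Measurable σ) (hρσ : ρ ≤ σ) :
    IsWeakUpperGradient μ p u σ :=
  ⟨hσ, fun z => (hu.2.1 z).trans (hρσ z),
    hu.2.2.mono fun γ hγ hle => hγ (hle.trans (γ.integral_mono hρσ))⟩

variable {ι : Type*} [Fintype ι] {E : ι → Type*} [∀ i, NormedAddCommGroup (E i)]

lemma IsWeakUpperGradient.pi_iSup {u : ∀ i, Z → E i} {ρ : ι → Z → ℝ}
    (hu : ∀ i, IsWeakUpperGradient μ p (u i) (ρ i)) :
    IsWeakUpperGradient μ p (fun z i => u i z) (fun z => ⨆ i, ρ i z) := by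
  have hle : ∀ i, ρ i ≤ fun z => ⨆ i, ρ i z := fun i z =>
    le_ciSup (Finite.bddAbove_range fun j => ρ j z) i
  have hsup (i : ι) : IsWeakUpperGradient μ p (u i) (fun z => ⨆ i, ρ i z) :=
    (hu i).mono (Measurable.iSup fun j => (hu j).1) (hle i)
  refine ⟨Measurable.iSup fun i => (hu i).1, fun z => Real.iSup_nonneg fun i => (hu i).2.1 z,
    (PNegligible.iUnion fun i => (hsup i).2.2).mono fun γ hγ => ?_⟩
  by_contra hgood
  simp only [Set.mem_iUnion, Set.mem_ofPred_eq, not_exists, not_not] at hgood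
  exact hγ (by simpa only [ofReal_norm, pi_enorm_le_iff, Pi.sub_apply] using hgood)

lemma IsMinimalWeakUpperGradient.pi_iSup {u : ∀ i, Z → E i} {ρ : ι → Z → ℝ}
    (hρ : ∀ i, IsMinimalWeakUpperGradient μ p (u i) (ρ i)) :
    IsMinimalWeakUpperGradient μ p (fun z i => u i z) (fun z => ⨆ i, ρ i z) := by
  refine ⟨.pi_iSup fun i => (hρ i).1, .iSup fun i => (hρ i).2.1, fun σ hσ hσLp => ?_⟩
  have hρ_le (i : ι) : ∀ᵐ z ∂μ, ρ i z ≤ σ z :=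
    (hρ i).2.2 σ (hσ.of_norm_sub_le fun x y => norm_le_pi_norm (fun i => u i x - u i y) i) hσLp
  filter_upwards [ae_all_iff.2 hρ_le] with z hz
  exact Real.iSup_le hz (hσ.2.1 z)

end WeakUpperGradient

theorem stmt_9_general {Z : Type*} [MetricSpace Z] [MeasurableSpace Z]
    (μ : Measure Z) (p : ℝ≥0∞)
    (n : ℕ) (u : Fin n → Z → ℝ) (hu : ∀ i, MemLp (u i) p μ)
    (ρ : Fin n → Z → ℝ)
    (hρ : ∀ i, IsMinimalWeakUpperGradient μ p (u i) (ρ i)) :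
    MemLp (fun z => (fun i => u i z : Fin n → ℝ)) p μ ∧
      ∃ ρu : Z → ℝ,
        IsMinimalWeakUpperGradient μ p (fun z => (fun i => u i z : Fin n → ℝ)) ρu ∧
        ρu =ᵐ[μ] fun z => ⨆ i, ρ i z :=
  ⟨.of_eval hu, _, .pi_iSup hρ, .rfl⟩

/-- **Part of Lemma 4.6.** Let `V_n = ℝⁿ` with the supremum norm (the `Pi` norm on
`Fin n → ℝ`). If `u = Σ uᵢ eᵢ` with each `uᵢ ∈ W^{1,p}(Z)` (i.e. `uᵢ ∈ L^p` with a
minimal `p`-weak upper gradient `ρᵢ`), then `u ∈ W^{1,p}(Z; V_n)` and its minimal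
`p`-weak upper gradient equals `supᵢ ρᵢ` almost everywhere. -/
theorem stmt_9 {Z : Type*} [MetricSpace Z] [MeasurableSpace Z] [BorelSpace Z]
    (μ : Measure Z) (p : ℝ≥0∞) (hp : 1 ≤ p) (hp' : p ≠ ⊤)
    (n : ℕ) (u : Fin n → Z → ℝ) (hu : ∀ i, MemLp (u i) p μ)
    (ρ : Fin n → Z → ℝ)
    (hρ : ∀ i, IsMinimalWeakUpperGradient μ p (u i) (ρ i)) :
    MemLp (fun z => (fun i => u i z : Fin n → ℝ)) p μ ∧
      ∃ ρu : Z → ℝ,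
        IsMinimalWeakUpperGradient μ p (fun z => (fun i => u i z : Fin n → ℝ)) ρu ∧
        ρu =ᵐ[μ] fun z => ⨆ i, ρ i z :=
  stmt_9_general μ p n u hu ρ hρ
end

section
/- Let (Z,d,μ) be a doubling metric measure space, 1 < p < ∞, Ω ⊆ Z a measurable set satisfying the measure-density condition with constant c_Ω, and V a Banach space. If u ∈ L^1_loc(Ω; V) has g ∈ D_{loc,p}(u) with g restricted to each ball B(z,s) ∩ Ω (z ∈ Ω, s ≤ 1) a Hajłasz upper gradient of u there, then the local sharp maximal function u^♯_s(z) = sup_{0<t<s} (1/t)·⨍_{Ω∩B(z,t)}⨍_{Ω∩B(z,t)} |u(x)−u(y)| dμ(x) dμ(y) satisfies u^♯_s(z) ≤ C(c_Ω)·M(ĝ)(z) for every z ∈ Ω, where ĝ is the zero extension of g and M the Hardy–Littlewood maximal function on Z. -/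
open MeasureTheory Metric
open scoped ENNReal NNReal

/-- The restricted sharp maximal function
`u♯ₛ(z) = sup_{0<t<s} (1/t) ⨍_{Ω∩B(z,t)} ⨍_{Ω∩B(z,t)} ‖u(x) − u(y)‖ dμ(x) dμ(y)`. -/
noncomputable def sharpFn {Z V : Type*} [MetricSpace Z] [MeasurableSpace Z]
    [NormedAddCommGroup V] (μ : MeasureTheory.Measure Z) (Ω : Set Z) (s : ℝ)
    (u : Z → V) (z : Z) : ℝ≥0∞ :=
  ⨆ (t : ℝ) (_ : 0 < t) (_ : t < s),
    (ENNReal.ofReal t)⁻¹ *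
      ⨍⁻ x in Metric.ball z t ∩ Ω,
        (⨍⁻ y in Metric.ball z t ∩ Ω, ENNReal.ofReal ‖u x - u y‖ ∂μ) ∂μ

/-- The Hardy–Littlewood maximal function `M f (x) = sup_{r>0} ⨍_{B(x,r)} ‖f‖ dμ`. -/
noncomputable def maximalFn {Z V : Type*} [MetricSpace Z] [MeasurableSpace Z]
    [NormedAddCommGroup V] (μ : MeasureTheory.Measure Z) (f : Z → V) (x : Z) : ℝ≥0∞ :=
  ⨆ (r : ℝ) (_ : 0 < r), ⨍⁻ y in Metric.ball x r, (‖f y‖₊ : ℝ≥0∞) ∂μ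


/-! On `S = B(z,t) ∩ Ω` the Hajłasz inequality gives `‖u x - u y‖ ≤ 2t (|g x| + |g y|)` off a
null set, so the double average of `‖u x - u y‖` over `S` is at most `4t ⨍_S |g|`. Since
`t < s ≤ 1`, the measure-density condition `μ S ≥ c_Ω μ(B(z,t))` bounds `⨍_S |g|` by
`c_Ω⁻¹ ⨍_{B(z,t)} |ĝ| ≤ c_Ω⁻¹ M ĝ(z)`, so `C = 4 / c_Ω` works. -/

namespace MeasureTheory

variable {α : Type*} [MeasurableSpace α] {μ : Measure α}

theorem setLAverage_eq_lintegral_cond (s : Set α) (f : α → ℝ≥0∞) :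
    ⨍⁻ x in s, f x ∂μ = ∫⁻ x, f x ∂ProbabilityTheory.cond μ s := by
  rw [laverage_eq', Measure.restrict_apply_univ]
  rfl

-- `s` need not be measurable (no Borel structure is assumed on balls), hence `hg`.
theorem setLAverage_mono {s : Set α} {f g : α → ℝ≥0∞} (hg : Measurable g)
    (hfg : ∀ x ∈ s, f x ≤ g x) : ⨍⁻ x in s, f x ∂μ ≤ ⨍⁻ x in s, g x ∂μ := by
  simp only [setLAverage_eq]
  exact ENNReal.div_le_div_right (setLIntegral_mono hg hfg) _

theorem setLAverage_const_mul_const_add {s : Set α} (hs₀ : μ s ≠ 0) (hs : μ s ≠ ⊤)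
    {G : α → ℝ≥0∞} (hG : Measurable G) (c a : ℝ≥0∞) :
    ⨍⁻ y in s, c * (a + G y) ∂μ = c * (a + ⨍⁻ y in s, G y ∂μ) := by
  have := ProbabilityTheory.cond_isProbabilityMeasure_of_finite hs₀ hs
  simp only [setLAverage_eq_lintegral_cond]
  rw [lintegral_const_mul _ (by fun_prop), lintegral_add_left measurable_const, lintegral_const,
    measure_univ, mul_one]

theorem setLAverage_setLAverage_le {S N : Set α} (hN : μ N = 0) {F : α → α → ℝ≥0∞}
    {G : α → ℝ≥0∞} (hG : Measurable G) (c : ℝ≥0∞)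
    (hF : ∀ x ∈ S \ N, ∀ y ∈ S \ N, F x y ≤ c * (G x + G y)) :
    ⨍⁻ x in S, ⨍⁻ y in S, F x y ∂μ ∂μ ≤ 2 * c * ⨍⁻ x in S, G x ∂μ := by
  simp only [← setLAverage_congr (sdiff_null_ae_eq_self (s := S) hN)]
  set T := S \ N
  rcases eq_or_ne (μ T) 0 with h₀ | h₀
  · simp [Measure.restrict_eq_zero.2 h₀]
  -- an average over a set of infinite measure is `0`
  rcases eq_or_ne (μ T) ⊤ with htop | htop
  · simp [setLAverage_eq, htop]
  have hinner : ∀ x ∈ T, ⨍⁻ y in T, F x y ∂μ ≤ c * (G x + ⨍⁻ y in T, G y ∂μ) := fun x hx =>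
    calc ⨍⁻ y in T, F x y ∂μ ≤ ⨍⁻ y in T, c * (G x + G y) ∂μ :=
          setLAverage_mono (by fun_prop) (hF x hx)
      _ = c * (G x + ⨍⁻ y in T, G y ∂μ) := setLAverage_const_mul_const_add h₀ htop hG c _
  calc ⨍⁻ x in T, ⨍⁻ y in T, F x y ∂μ ∂μ
      ≤ ⨍⁻ x in T, c * (G x + ⨍⁻ y in T, G y ∂μ) ∂μ := setLAverage_mono (by fun_prop) hinner
    _ = c * (⨍⁻ y in T, G y ∂μ + ⨍⁻ y in T, G y ∂μ) := by
      simp only [add_comm (G _)]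
      exact setLAverage_const_mul_const_add h₀ htop hG c _
    _ = 2 * c * ⨍⁻ x in T, G x ∂μ := by ring

theorem setLAverage_inter_le_of_measure_le {B Ω : Set α} (hΩ : MeasurableSet Ω) {c : ℝ≥0}
    (hc : c ≠ 0) (hdens : c * μ B ≤ μ (B ∩ Ω)) (f : α → ℝ≥0∞) :
    ⨍⁻ x in B ∩ Ω, f x ∂μ ≤ (c : ℝ≥0∞)⁻¹ * ⨍⁻ x in B, Ω.indicator f x ∂μ := by
  simp only [setLAverage_eq]
  rw [lintegral_indicator hΩ, Measure.restrict_restrict hΩ, Set.inter_comm Ω,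
    ENNReal.div_eq_inv_mul, ENNReal.div_eq_inv_mul, ← mul_assoc,
    ← ENNReal.mul_inv (by simp [hc]) (by simp)]
  gcongr

end MeasureTheory

open MeasureTheory Metric

theorem ofReal_norm_sub_le_of_mem_ball {Z V : Type*} [PseudoMetricSpace Z]
    [SeminormedAddCommGroup V] {u : Z → V} {g : Z → ℝ} {z x y : Z} {t : ℝ}
    (hx : x ∈ ball z t) (hy : y ∈ ball z t) (hxy : ‖u x - u y‖ ≤ dist x y * (g x + g y)) :
    ENNReal.ofReal ‖u x - u y‖ ≤ 2 * ENNReal.ofReal t * (‖g x‖ₑ + ‖g y‖ₑ) := by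
  have hdist : dist x y ≤ 2 * t := by
    linarith [dist_triangle_right x y z, mem_ball.1 hx, mem_ball.1 hy]
  have hreal : ‖u x - u y‖ ≤ 2 * t * (‖g x‖ + ‖g y‖) :=
    calc ‖u x - u y‖ ≤ dist x y * (g x + g y) := hxy
      _ ≤ dist x y * (‖g x‖ + ‖g y‖) := by
        gcongr <;> exact Real.le_norm_self _
      _ ≤ 2 * t * (‖g x‖ + ‖g y‖) := by gcongr
  calc ENNReal.ofReal ‖u x - u y‖ ≤ ENNReal.ofReal (2 * t * (‖g x‖ + ‖g y‖)) :=
        ENNReal.ofReal_le_ofReal hreal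
    _ = 2 * ENNReal.ofReal t * (‖g x‖ₑ + ‖g y‖ₑ) := by
      rw [ENNReal.ofReal_mul (dist_nonneg.trans hdist),
        ENNReal.ofReal_add (norm_nonneg _) (norm_nonneg _), ENNReal.ofReal_mul zero_le_two,
        ENNReal.ofReal_ofNat, ofReal_norm, ofReal_norm]

theorem stmt_15_general {Z V : Type*} [MetricSpace Z] [MeasurableSpace Z]
    [NormedAddCommGroup V]
    (μ : Measure Z)
    (Ω : Set Z) (hΩ : MeasurableSet Ω) (cΩ : ℝ≥0) (hcΩ : 0 < cΩ)
    (hdensity : ∀ x ∈ Ω, ∀ r : ℝ, 0 < r → r ≤ 1 →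
      (cΩ : ℝ≥0∞) * μ (ball x r) ≤ μ (ball x r ∩ Ω))
    (u : Z → V) (g : Z → ℝ) (hgmeas : Measurable g)
    (s : ℝ) (hs1 : s ≤ 1)
    (hgrad : ∀ z ∈ Ω, ∃ N : Set Z, μ N = 0 ∧
      ∀ x ∈ (ball z s ∩ Ω) \ N, ∀ y ∈ (ball z s ∩ Ω) \ N,
        ‖u x - u y‖ ≤ dist x y * (g x + g y)) :
    ∃ C : ℝ≥0, 0 < C ∧ ∀ z ∈ Ω,
      sharpFn μ Ω s u z ≤ (C : ℝ≥0∞) * maximalFn μ (Ω.indicator g) z := by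
  refine ⟨4 * cΩ⁻¹, by positivity, fun z hz => ?_⟩
  obtain ⟨N, hN, hgradN⟩ := hgrad z hz
  refine iSup₂_le fun t ht => iSup_le fun hts => ?_
  have hsub : ∀ x ∈ (ball z t ∩ Ω) \ N, x ∈ (ball z s ∩ Ω) \ N := fun x ⟨⟨hxB, hxΩ⟩, hxN⟩ =>
    ⟨⟨ball_subset_ball hts.le hxB, hxΩ⟩, hxN⟩
  have hpair : ∀ x ∈ (ball z t ∩ Ω) \ N, ∀ y ∈ (ball z t ∩ Ω) \ N,
      ENNReal.ofReal ‖u x - u y‖ ≤ 2 * ENNReal.ofReal t * (‖g x‖ₑ + ‖g y‖ₑ) := fun x hx y hy =>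
    ofReal_norm_sub_le_of_mem_ball hx.1.1 hy.1.1 (hgradN x (hsub x hx) y (hsub y hy))
  have ht₀ : ENNReal.ofReal t ≠ 0 := ENNReal.ofReal_ne_zero_iff.2 ht
  calc (ENNReal.ofReal t)⁻¹ *
        ⨍⁻ x in ball z t ∩ Ω, ⨍⁻ y in ball z t ∩ Ω, ENNReal.ofReal ‖u x - u y‖ ∂μ ∂μ
      ≤ (ENNReal.ofReal t)⁻¹ *
          (2 * (2 * ENNReal.ofReal t) * ⨍⁻ x in ball z t ∩ Ω, ‖g x‖ₑ ∂μ) := by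
        gcongr
        exact setLAverage_setLAverage_le hN (by fun_prop) _ hpair
    _ = 4 * ⨍⁻ x in ball z t ∩ Ω, ‖g x‖ₑ ∂μ := by
        rw [show ∀ a b : ℝ≥0∞, 2 * (2 * a) * b = a * (4 * b) by intros; ring,
          ENNReal.inv_mul_cancel_left ht₀ ENNReal.ofReal_ne_top]
    _ ≤ 4 * ((cΩ : ℝ≥0∞)⁻¹ * ⨍⁻ x in ball z t, Ω.indicator (‖g ·‖ₑ) x ∂μ) := by
        gcongr
        exact setLAverage_inter_le_of_measure_le hΩ hcΩ.ne'
          (hdensity z hz t ht (hts.le.trans hs1)) _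
    _ = ((4 * cΩ⁻¹ : ℝ≥0) : ℝ≥0∞) * ⨍⁻ x in ball z t, ‖Ω.indicator g x‖₊ ∂μ := by
        simp only [← enorm_eq_nnnorm, enorm_indicator_eq_indicator_enorm, ENNReal.coe_mul,
          ENNReal.coe_inv hcΩ.ne', ENNReal.coe_ofNat, mul_assoc]
    _ ≤ ((4 * cΩ⁻¹ : ℝ≥0) : ℝ≥0∞) * maximalFn μ (Ω.indicator g) z := by
        gcongr
        exact le_iSup₂_of_le (f := fun r _ => _) t ht le_rfl

/-- **First half of Proposition 3.12.** If `Ω` satisfies the measure-density condition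
and `g` is a Hajłasz upper gradient of `u` on every ball `B(z,s) ∩ Ω`, `z ∈ Ω`,
`0 < s ≤ 1`, then the restricted sharp maximal function satisfies
`u♯ₛ(z) ≤ C(c_Ω) · M(ĝ)(z)` for every `z ∈ Ω`, where `ĝ` is the zero extension
of `g` and `M` the Hardy–Littlewood maximal function on `Z`. -/
theorem stmt_15 {Z V : Type*} [MetricSpace Z] [MeasurableSpace Z]
    [NormedAddCommGroup V]
    (μ : Measure Z)
    (hposμ : ∀ (x : Z) (r : ℝ), 0 < r → 0 < μ (ball x r))
    (hfinμ : ∀ (x : Z) (r : ℝ), μ (ball x r) < ⊤)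
    (cμ : ℝ≥0) (hdoubling : ∀ (x : Z) (r : ℝ), μ (ball x (2 * r)) ≤ cμ * μ (ball x r))
    (Ω : Set Z) (hΩ : MeasurableSet Ω) (cΩ : ℝ≥0) (hcΩ : 0 < cΩ)
    (hdensity : ∀ x ∈ Ω, ∀ r : ℝ, 0 < r → r ≤ 1 →
      (cΩ : ℝ≥0∞) * μ (ball x r) ≤ μ (ball x r ∩ Ω))
    (u : Z → V) (g : Z → ℝ) (hgmeas : Measurable g) (hg0 : ∀ z, 0 ≤ g z)
    (s : ℝ) (hs : 0 < s) (hs1 : s ≤ 1)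
    (hgrad : ∀ z ∈ Ω, ∃ N : Set Z, μ N = 0 ∧
      ∀ x ∈ (ball z s ∩ Ω) \ N, ∀ y ∈ (ball z s ∩ Ω) \ N,
        ‖u x - u y‖ ≤ dist x y * (g x + g y)) :
    ∃ C : ℝ≥0, 0 < C ∧ ∀ z ∈ Ω,
      sharpFn μ Ω s u z ≤ (C : ℝ≥0∞) * maximalFn μ (Ω.indicator g) z :=
  stmt_15_general μ Ω hΩ cΩ hcΩ hdensity u g hgmeas s hs1 hgrad
end
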